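/- arXiv:2504.06240 — 3 statements merged into one kernel-verified Lean document; each statement's English description precedes it below -/
import Mathlib

section
/- (Willems' fundamental lemma, 'if' direction with rank hypothesis) Let (u_d, y_d) be a length-T trajectory of a controllable LTI system (A,B,C,D) of state dimension n, and suppose the matrix col(ℋ_L(u_d), X) has full row rank mL + n, where X = [x(0) x(1) ⋯ x(T-L)] collects the states along the data trajectory. Then for every length-L input-output pair (u, y) that is a trajectory of the system, there exists g with ℋ_L(u_d) g = u and ℋ_L(y_d) g = y. -/
private lemma pull_sum {ι : Type*} [Fintype ι] (a : ℝ) (g v : ι → ℝ) :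
    ∑ c, g c * (a * v c) = a * ∑ c, g c * v c := by
  rw [Finset.mul_sum]
  exact Finset.sum_congr rfl fun c _ => by ring

/-- Willems' fundamental lemma ('if' direction, rank form): if the data
comes from a controllable LTI system and `col(ℋ_L(u_d), X)` has full row rank
`mL + n`, then every length-`L` trajectory of the system is a linear combination of
the Hankel columns. -/
theorem willems_fundamental_lemma
    {n m p : ℕ} (T L : ℕ) (hL : 1 ≤ L) (hLT : L ≤ T)
    (A : Matrix (Fin n) (Fin n) ℝ) (B : Matrix (Fin n) (Fin m) ℝ)
    (C : Matrix (Fin p) (Fin n) ℝ) (D : Matrix (Fin p) (Fin m) ℝ)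
    (hctrb : (Matrix.of fun (i : Fin n) (q : Fin n × Fin m) =>
      (A ^ (q.1 : ℕ) * B) i q.2).rank = n)
    (ud : ℕ → Fin m → ℝ) (yd : ℕ → Fin p → ℝ) (xd : ℕ → Fin n → ℝ)
    (hxd : ∀ k, xd (k + 1) = A.mulVec (xd k) + B.mulVec (ud k))
    (hyd : ∀ k < T, yd k = C.mulVec (xd k) + D.mulVec (ud k))
    (hrank : (Matrix.of fun (r : (Fin L × Fin m) ⊕ Fin n) (c : Fin (T - L + 1)) =>
        Sum.elim (fun q => ud ((q.1 : ℕ) + c) q.2) (fun i => xd (c : ℕ) i) r).rank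
      = m * L + n)
    (u : ℕ → Fin m → ℝ) (y : ℕ → Fin p → ℝ) (x : ℕ → Fin n → ℝ)
    (hx : ∀ k, x (k + 1) = A.mulVec (x k) + B.mulVec (u k))
    (hyt : ∀ k < L, y k = C.mulVec (x k) + D.mulVec (u k)) :
    ∃ g : Fin (T - L + 1) → ℝ,
      (∀ k < L, (∑ j, g j • ud (k + j)) = u k) ∧
      (∀ k < L, (∑ j, g j • yd (k + j)) = y k) := by
  set M : Matrix ((Fin L × Fin m) ⊕ Fin n) (Fin (T - L + 1)) ℝ :=
    Matrix.of fun r c =>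
      Sum.elim (fun q => ud ((q.1 : ℕ) + c) q.2) (fun i => xd (c : ℕ) i) r with hM
  have hsurj : Function.Surjective M.mulVecLin := by
    rw [← LinearMap.range_eq_top]
    apply Submodule.eq_top_of_finrank_eq
    rw [← Matrix.rank, hrank]
    simp [Module.finrank_pi, mul_comm]
  obtain ⟨g, hg⟩ := hsurj (Sum.elim (fun q : Fin L × Fin m => u (q.1 : ℕ) q.2) (fun i => x 0 i))
  have hgu : ∀ k, k < L → ∀ i : Fin m, (∑ c, g c * ud (k + (c : ℕ)) i) = u k i := by
    intro k hk i
    have := congrFun hg (Sum.inl (⟨⟨k, hk⟩, i⟩ : Fin L × Fin m))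
    simpa [Matrix.mulVecLin, Matrix.mulVec, dotProduct, hM, mul_comm] using this
  have hgx : ∀ i : Fin n, (∑ c, g c * xd (c : ℕ) i) = x 0 i := by
    intro i
    have := congrFun hg (Sum.inr i)
    simpa [Matrix.mulVecLin, Matrix.mulVec, dotProduct, hM, mul_comm] using this
  set z : ℕ → Fin n → ℝ := fun k i => ∑ c, g c * xd (k + (c : ℕ)) i with hz
  have hzx : ∀ k, k < L → z k = x k := by
    intro k
    induction k with
    | zero =>
      intro _
      funext i
      simpa [hz] using hgx i
    | succ k ih =>
      intro hk
      have hk' : k < L := Nat.lt_of_succ_lt hk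
      have ihk := ih hk'
      funext i
      have step : ∀ c : Fin (T - L + 1),
          xd (k + 1 + (c : ℕ)) i =
            (∑ j, A i j * xd (k + (c : ℕ)) j) + ∑ j, B i j * ud (k + (c : ℕ)) j := by
        intro c
        have : k + 1 + (c : ℕ) = (k + (c : ℕ)) + 1 := by omega
        rw [this, hxd]
        simp [Matrix.mulVec, dotProduct]
      have key : z (k + 1) i =
          (∑ j, A i j * z k j) + ∑ j, B i j * u k j := by
        simp only [hz, step, mul_add, Finset.sum_add_distrib, Finset.mul_sum]
        congr 1
        · rw [Finset.sum_comm]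
          exact Finset.sum_congr rfl fun j _ => Finset.sum_congr rfl fun c _ => by ring
        · rw [Finset.sum_comm]
          refine Finset.sum_congr rfl fun j _ => ?_
          rw [pull_sum, hgu k hk' j]
      rw [key, ihk, hx]
      simp [Matrix.mulVec, dotProduct]
  refine ⟨g, ?_, ?_⟩
  · intro k hk
    funext i
    simpa [Finset.sum_apply, mul_comm] using hgu k hk i
  · intro k hk
    funext i
    have hyc : ∀ c : Fin (T - L + 1), k + (c : ℕ) < T := by
      intro c
      have := c.isLt
      omega
    have expand : ∀ c : Fin (T - L + 1),
        yd (k + (c : ℕ)) i =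
          (∑ j, C i j * xd (k + (c : ℕ)) j) + ∑ j, D i j * ud (k + (c : ℕ)) j := by
      intro c
      rw [hyd _ (hyc c)]
      simp [Matrix.mulVec, dotProduct]
    have key : (∑ c, g c * yd (k + (c : ℕ)) i) =
        (∑ j, C i j * z k j) + ∑ j, D i j * u k j := by
      simp only [expand, mul_add, Finset.sum_add_distrib, Finset.mul_sum]
      congr 1
      · rw [Finset.sum_comm]
        refine Finset.sum_congr rfl fun j _ => ?_
        rw [pull_sum]
      · rw [Finset.sum_comm]
        refine Finset.sum_congr rfl fun j _ => ?_
        rw [pull_sum, hgu k hk j]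
    calc (∑ j, g j • yd (k + (j : ℕ))) i = ∑ c, g c * yd (k + (c : ℕ)) i := by
          simp [Finset.sum_apply]
      _ = (∑ j, C i j * z k j) + ∑ j, D i j * u k j := key
      _ = y k i := by
          rw [hzx k hk, hyt k hk]
          simp [Matrix.mulVec, dotProduct]
end

section
/- (Extended Willems lemma for exact Koopman embeddings, 'only if' direction) Suppose the nonlinear system admits an exact Koopman linear embedding with lifted dimension n_z and matrices (A,B,C,D), and the collected data (u_d, y_d) of length T from the nonlinear system provides lifted excitation of order L, i.e., the matrix H_K stacking ℋ_L(u_d) on top of [Φ(x(0)) ⋯ Φ(x(T-L))] has full row rank mL + n_z. Then any length-L trajectory (u, y) of the nonlinear system can be written as (ℋ_L(u_d) g, ℋ_L(y_d) g) for some g ∈ ℝ^{T-L+1}. -/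
/-- extended Willems lemma for exact Koopman embeddings: under lifted
excitation of order `L`, any length-`L` trajectory of the nonlinear system is a
linear combination of the Hankel columns of the data. -/
theorem extended_willems_koopman
    {nx nz m p : ℕ} (T L : ℕ) (hL : 1 ≤ L) (hLT : L ≤ T)
    (f : (Fin nx → ℝ) → (Fin m → ℝ) → (Fin nx → ℝ))
    (Φ : (Fin nx → ℝ) → (Fin nz → ℝ))
    (A : Matrix (Fin nz) (Fin nz) ℝ) (B : Matrix (Fin nz) (Fin m) ℝ)
    (C : Matrix (Fin p) (Fin nz) ℝ) (D : Matrix (Fin p) (Fin m) ℝ)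
    (hKoop : ∀ x u, Φ (f x u) = A.mulVec (Φ x) + B.mulVec u)
    (ud : ℕ → Fin m → ℝ) (yd : ℕ → Fin p → ℝ) (xd : ℕ → Fin nx → ℝ)
    (hxd : ∀ k, xd (k + 1) = f (xd k) (ud k))
    (hyd : ∀ k < T, yd k = C.mulVec (Φ (xd k)) + D.mulVec (ud k))
    (hexc : (Matrix.of fun (r : (Fin L × Fin m) ⊕ Fin nz) (c : Fin (T - L + 1)) =>
        Sum.elim (fun q => ud ((q.1 : ℕ) + c) q.2) (fun i => Φ (xd (c : ℕ)) i) r).rank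
      = m * L + nz)
    (x₀ : Fin nx → ℝ) (u : ℕ → Fin m → ℝ)
    (x : ℕ → Fin nx → ℝ) (hx0 : x 0 = x₀)
    (hx : ∀ k, x (k + 1) = f (x k) (u k))
    (y : ℕ → Fin p → ℝ)
    (hy : ∀ k < L, y k = C.mulVec (Φ (x k)) + D.mulVec (u k)) :
    ∃ g : Fin (T - L + 1) → ℝ,
      (∀ k < L, (∑ j, g j • ud (k + j)) = u k) ∧
      (∀ k < L, (∑ j, g j • yd (k + j)) = y k) := by
  classical
  set M : Matrix ((Fin L × Fin m) ⊕ Fin nz) (Fin (T - L + 1)) ℝ :=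
    Matrix.of fun (r : (Fin L × Fin m) ⊕ Fin nz) (c : Fin (T - L + 1)) =>
        Sum.elim (fun q => ud ((q.1 : ℕ) + c) q.2) (fun i => Φ (xd (c : ℕ)) i) r with hM
  -- surjectivity of mulVec from full row rank
  have hcard : Module.finrank ℝ (((Fin L × Fin m) ⊕ Fin nz) → ℝ) = m * L + nz := by
    simp [Module.finrank_fintype_fun_eq_card, Fintype.card_sum, Fintype.card_prod,
      Nat.mul_comm]
  have hrange : LinearMap.range M.mulVecLin = ⊤ := by
    apply Submodule.eq_top_of_finrank_eq
    rw [show Module.finrank ℝ ↥(LinearMap.range M.mulVecLin) = M.rank from rfl, hexc, hcard]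
  have hsurj : Function.Surjective M.mulVec := by
    intro v
    obtain ⟨g, hg⟩ := LinearMap.range_eq_top.mp hrange v
    exact ⟨g, by simpa using hg⟩
  obtain ⟨g, hg⟩ := hsurj (Sum.elim (fun q : Fin L × Fin m => u q.1 q.2) (Φ x₀))
  refine ⟨g, ?_, ?_⟩
  · -- input identity
    have hu : ∀ k < L, (∑ j, g j • ud (k + j)) = u k := by
      intro k hk
      funext q
      have h1 := congrFun hg (Sum.inl (⟨k, hk⟩, q))
      simp only [Matrix.mulVec, dotProduct, hM, Matrix.of_apply, Sum.elim_inl] at h1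
      simp only [Finset.sum_apply, Pi.smul_apply, smul_eq_mul]
      rw [← h1]
      exact Finset.sum_congr rfl fun c _ => mul_comm _ _
    exact hu
  · -- output identity
    have hu : ∀ k < L, (∑ j, g j • ud (k + j)) = u k := by
      intro k hk
      funext q
      have h1 := congrFun hg (Sum.inl (⟨k, hk⟩, q))
      simp only [Matrix.mulVec, dotProduct, hM, Matrix.of_apply, Sum.elim_inl] at h1
      simp only [Finset.sum_apply, Pi.smul_apply, smul_eq_mul]
      rw [← h1]
      exact Finset.sum_congr rfl fun c _ => mul_comm _ _
    have hΦ0 : (∑ c : Fin (T - L + 1), g c • Φ (xd (c : ℕ))) = Φ x₀ := by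
      funext i
      have h1 := congrFun hg (Sum.inr i)
      simp only [Matrix.mulVec, dotProduct, hM, Matrix.of_apply, Sum.elim_inr] at h1
      simp only [Finset.sum_apply, Pi.smul_apply, smul_eq_mul]
      rw [← h1]
      exact Finset.sum_congr rfl fun c _ => mul_comm _ _
    have hstate : ∀ k, k ≤ L → (∑ c : Fin (T - L + 1), g c • Φ (xd (k + c))) = Φ (x k) := by
      intro k
      induction k with
      | zero => intro _; simpa [hx0] using hΦ0
      | succ k ih =>
        intro hk
        have hkL : k < L := hk
        have ihk := ih hkL.le
        have hstep : ∀ c : Fin (T - L + 1),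
            Φ (xd (k + 1 + (c : ℕ))) = A.mulVec (Φ (xd (k + c))) + B.mulVec (ud (k + c)) := by
          intro c
          have he : k + 1 + (c : ℕ) = (k + (c : ℕ)) + 1 := by ring
          rw [he, hxd, hKoop]
        calc (∑ c : Fin (T - L + 1), g c • Φ (xd (k + 1 + c)))
            = ∑ c : Fin (T - L + 1),
                (g c • A.mulVec (Φ (xd (k + c))) + g c • B.mulVec (ud (k + c))) := by
              refine Finset.sum_congr rfl fun c _ => ?_
              rw [hstep c, smul_add]
          _ = (∑ c : Fin (T - L + 1), g c • A.mulVec (Φ (xd (k + c))))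
              + ∑ c : Fin (T - L + 1), g c • B.mulVec (ud (k + c)) :=
              Finset.sum_add_distrib
          _ = A.mulVec (∑ c : Fin (T - L + 1), g c • Φ (xd (k + c)))
              + B.mulVec (∑ c : Fin (T - L + 1), g c • ud (k + c)) := by
              rw [← Matrix.mulVecLin_apply, ← Matrix.mulVecLin_apply, map_sum, map_sum]
              simp
          _ = A.mulVec (Φ (x k)) + B.mulVec (u k) := by rw [ihk, hu k hkL]
          _ = Φ (x (k + 1)) := by rw [hx, hKoop]
    intro k hk
    have hT : ∀ c : Fin (T - L + 1), k + (c : ℕ) < T := by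
      intro c
      have := c.isLt
      omega
    calc (∑ j, g j • yd (k + j))
        = ∑ c : Fin (T - L + 1),
            (g c • C.mulVec (Φ (xd (k + c))) + g c • D.mulVec (ud (k + c))) := by
          refine Finset.sum_congr rfl fun c _ => ?_
          rw [hyd _ (hT c), smul_add]
      _ = (∑ c : Fin (T - L + 1), g c • C.mulVec (Φ (xd (k + c))))
          + ∑ c : Fin (T - L + 1), g c • D.mulVec (ud (k + c)) := Finset.sum_add_distrib
      _ = C.mulVec (∑ c : Fin (T - L + 1), g c • Φ (xd (k + c)))
          + D.mulVec (∑ c : Fin (T - L + 1), g c • ud (k + c)) := by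
          rw [← Matrix.mulVecLin_apply, ← Matrix.mulVecLin_apply, map_sum, map_sum]
          simp
      _ = C.mulVec (Φ (x k)) + D.mulVec (u k) := by rw [hstate k hk.le, hu k hk]
      _ = y k := (hy k hk).symm
end

section
/- (Uniqueness of the predicted output in the data-driven representation) Suppose col(ℋ_L(u_d), X) has full row rank mL + n (where X collects the data states) for an observable LTI system with T_ini ≥ n and L = T_ini + N. If two vectors g₁, g₂ satisfy U_P g₁ = U_P g₂ = u_ini, Y_P g₁ = Y_P g₂ = y_ini, U_F g₁ = U_F g₂ = u_F, then Y_F g₁ = Y_F g₂; i.e., the future output y_F determined by (u_ini, y_ini, u_F) through the Hankel data equations is unique. -/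
open Matrix

/-- A matrix with `n` columns and rank `n` has injective `mulVec`. -/
lemma mulVec_injective_of_rank_eq {ι : Type*} [Fintype ι]
    {n : ℕ} (M : Matrix ι (Fin n) ℝ) (h : M.rank = n) {v : Fin n → ℝ}
    (hv : M.mulVec v = 0) : v = 0 := by
  have hker : LinearMap.ker M.mulVecLin = ⊥ := by
    have hrk := LinearMap.finrank_range_add_finrank_ker M.mulVecLin
    rw [Module.finrank_fintype_fun_eq_card, Fintype.card_fin] at hrk
    have : Module.finrank ℝ (LinearMap.ker M.mulVecLin) = 0 := by
      have : Module.finrank ℝ (LinearMap.range M.mulVecLin) = n := h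
      omega
    exact Submodule.finrank_eq_zero.mp this
  have : v ∈ LinearMap.ker M.mulVecLin := by
    simpa [Matrix.mulVecLin] using hv
  rw [hker] at this
  simpa using this

/-- uniqueness of the predicted output in the data-driven representation:
if `col(ℋ_L(u_d), X)` has full row rank, the system is observable over `T_ini ≥ n`
steps, and `g₁, g₂` match on the initial input/output blocks and the future input
block, then they produce the same future output block. -/
theorem predicted_output_unique
    {n m p : ℕ} (T Tini N : ℕ) (L : ℕ) (hLdef : L = Tini + N)
    (hTini : n ≤ Tini) (hL : 1 ≤ L) (hLT : L ≤ T)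
    (A : Matrix (Fin n) (Fin n) ℝ) (B : Matrix (Fin n) (Fin m) ℝ)
    (C : Matrix (Fin p) (Fin n) ℝ) (D : Matrix (Fin p) (Fin m) ℝ)
    (hobs : (Matrix.of fun (q : Fin Tini × Fin p) (c : Fin n) =>
      (C * A ^ (q.1 : ℕ)) q.2 c).rank = n)
    (ud : ℕ → Fin m → ℝ) (yd : ℕ → Fin p → ℝ) (xd : ℕ → Fin n → ℝ)
    (hxd : ∀ k, xd (k + 1) = A.mulVec (xd k) + B.mulVec (ud k))
    (hyd : ∀ k < T, yd k = C.mulVec (xd k) + D.mulVec (ud k))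
    (hrank : (Matrix.of fun (r : (Fin L × Fin m) ⊕ Fin n) (c : Fin (T - L + 1)) =>
        Sum.elim (fun q => ud ((q.1 : ℕ) + c) q.2) (fun i => xd (c : ℕ) i) r).rank
      = m * L + n)
    (g₁ g₂ : Fin (T - L + 1) → ℝ)
    (hUP : ∀ k < Tini, (∑ j, g₁ j • ud (k + j)) = ∑ j, g₂ j • ud (k + j))
    (hYP : ∀ k < Tini, (∑ j, g₁ j • yd (k + j)) = ∑ j, g₂ j • yd (k + j))
    (hUF : ∀ k, Tini ≤ k → k < L → (∑ j, g₁ j • ud (k + j)) = ∑ j, g₂ j • ud (k + j)) :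
    ∀ k, Tini ≤ k → k < L → (∑ j, g₁ j • yd (k + j)) = ∑ j, g₂ j • yd (k + j) := by
  set g : Fin (T - L + 1) → ℝ := fun j => g₁ j - g₂ j with hg
  set u : ℕ → Fin m → ℝ := fun k => ∑ j, g j • ud (k + j) with hu
  set y : ℕ → Fin p → ℝ := fun k => ∑ j, g j • yd (k + j) with hyy
  set x : ℕ → Fin n → ℝ := fun k => ∑ j, g j • xd (k + j) with hx
  have hsub : ∀ (α : Type) [inst : AddCommGroup α] [inst2 : Module ℝ α]
      (f : ℕ → α) (k : ℕ),
      (∑ j, g j • f (k + j)) = (∑ j, g₁ j • f (k + j)) - ∑ j, g₂ j • f (k + j) := by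
    intro α _ _ f k
    rw [← Finset.sum_sub_distrib]
    exact Finset.sum_congr rfl fun j _ => by rw [hg, sub_smul]
  -- zero input over the whole window
  have hu0 : ∀ k < L, u k = 0 := by
    intro k hk
    rcases lt_or_ge k Tini with h | h
    · rw [hu]; simp only; rw [hsub, hUP k h, sub_self]
    · rw [hu]; simp only; rw [hsub, hUF k h hk, sub_self]
  have hy0 : ∀ k < Tini, y k = 0 := by
    intro k hk
    rw [hyy]; simp only; rw [hsub, hYP k hk, sub_self]
  -- state recursion
  have hxrec : ∀ k, x (k + 1) = A.mulVec (x k) + B.mulVec (u k) := by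
    intro k
    have hA : A.mulVec (x k) = ∑ j, g j • A.mulVec (xd (k + j)) := by
      rw [hx]; simp only
      rw [show A.mulVec (∑ j, g j • xd (k + j)) = A.mulVecLin (∑ j, g j • xd (k + j)) from rfl,
        map_sum]
      exact Finset.sum_congr rfl fun j _ => by rw [_root_.map_smul]; rfl
    have hB : B.mulVec (u k) = ∑ j, g j • B.mulVec (ud (k + j)) := by
      rw [hu]; simp only
      rw [show B.mulVec (∑ j, g j • ud (k + j)) = B.mulVecLin (∑ j, g j • ud (k + j)) from rfl,
        map_sum]
      exact Finset.sum_congr rfl fun j _ => by rw [_root_.map_smul]; rfl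
    rw [hA, hB, ← Finset.sum_add_distrib, hx]
    simp only
    refine Finset.sum_congr rfl fun j _ => ?_
    rw [show k + 1 + (j : ℕ) = (k + j) + 1 by omega, hxd, smul_add]
  -- output equation on the window
  have hyeq : ∀ k < L, y k = C.mulVec (x k) + D.mulVec (u k) := by
    intro k hk
    have hC : C.mulVec (x k) = ∑ j, g j • C.mulVec (xd (k + j)) := by
      rw [hx]; simp only
      rw [show C.mulVec (∑ j, g j • xd (k + j)) = C.mulVecLin (∑ j, g j • xd (k + j)) from rfl,
        map_sum]
      exact Finset.sum_congr rfl fun j _ => by rw [_root_.map_smul]; rfl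
    have hD : D.mulVec (u k) = ∑ j, g j • D.mulVec (ud (k + j)) := by
      rw [hu]; simp only
      rw [show D.mulVec (∑ j, g j • ud (k + j)) = D.mulVecLin (∑ j, g j • ud (k + j)) from rfl,
        map_sum]
      exact Finset.sum_congr rfl fun j _ => by rw [_root_.map_smul]; rfl
    rw [hC, hD, ← Finset.sum_add_distrib, hyy]
    simp only
    refine Finset.sum_congr rfl fun j _ => ?_
    have hjT : k + (j : ℕ) < T := by have := j.isLt; omega
    rw [hyd _ hjT, smul_add]
  -- x evolves freely: x k = A^k x 0 for k ≤ L
  have hxfree : ∀ k ≤ L, x k = (A ^ k).mulVec (x 0) := by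
    intro k hk
    induction k with
    | zero => simp
    | succ k ih =>
        have hk' : k < L := by omega
        rw [hxrec k, hu0 k hk', Matrix.mulVec_zero, add_zero, ih (le_of_lt hk'),
          pow_succ', ← Matrix.mulVec_mulVec]
  -- observability forces x 0 = 0
  have hx0 : x 0 = 0 := by
    apply mulVec_injective_of_rank_eq _ hobs
    funext q
    have hq1 : (q.1 : ℕ) < Tini := q.1.isLt
    have hqL : (q.1 : ℕ) < L := by omega
    have hCx : C.mulVec (x (q.1 : ℕ)) = 0 := by
      have := hyeq (q.1 : ℕ) hqL
      rw [hu0 _ hqL, hy0 _ hq1, Matrix.mulVec_zero, add_zero] at this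
      exact this.symm
    have hmv : ((C * A ^ (q.1 : ℕ)).mulVec (x 0)) q.2 = 0 := by
      rw [← Matrix.mulVec_mulVec, ← hxfree _ (le_of_lt hqL), hCx]
      rfl
    calc ((Matrix.of fun (q : Fin Tini × Fin p) (c : Fin n) =>
            (C * A ^ (q.1 : ℕ)) q.2 c).mulVec (x 0)) q
        = ((C * A ^ (q.1 : ℕ)).mulVec (x 0)) q.2 := by
          simp [Matrix.mulVec, dotProduct]
      _ = 0 := hmv
  -- conclude
  intro k hk1 hk2
  have hxk : x k = 0 := by
    rw [hxfree k (le_of_lt hk2), hx0, Matrix.mulVec_zero]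
  have hyk : y k = 0 := by
    rw [hyeq k hk2, hxk, hu0 k hk2, Matrix.mulVec_zero, Matrix.mulVec_zero, add_zero]
  have := hyk
  rw [hyy] at this
  simp only at this
  rw [hsub] at this
  exact sub_eq_zero.mp this
end
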